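/- arXiv:1709.08438 — 2 statements merged into one kernel-verified Lean document; each statement's English description precedes it below -/
import Mathlib

section
/- The planar winding map w : ℂ → ℂ, w(z) = z²/|z| for z ≠ 0 and w(0) = 0, is 2-Lipschitz. -/
open Complex

private lemma winding_key (x y u v r s : ℝ) (hr : r^2 = x^2+y^2) (hs : s^2 = u^2+v^2)
    (hr0 : 0 ≤ r) (hs0 : 0 ≤ s) :
    (s*(x^2-y^2) - r*(u^2-v^2))^2 + (s*(2*x*y) - r*(2*u*v))^2
      ≤ 4*r^2*s^2*((x-u)^2+(y-v)^2) := by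
  have hid : 4*r^2*s^2*((x-u)^2+(y-v)^2)
      - ((s*(x^2-y^2) - r*(u^2-v^2))^2 + (s*(2*x*y) - r*(2*u*v))^2)
      = 3*r^2*s^2*(r-s)^2 + 4*(r*s)*(r*s - (x*u+y*v))^2 := by
    linear_combination (s^2*(x^2+y^2) - 3*r^2*s^2 + 2*r*s*(u^2+v^2)) * hr
      + (r^2*(u^2+v^2) - 3*r^2*s^2 + 2*r^3*s) * hs
  nlinarith [mul_nonneg (mul_nonneg hr0 hs0) (sq_nonneg (r*s - (x*u+y*v))),
    mul_nonneg (mul_nonneg (mul_nonneg hr0 hr0) (mul_nonneg hs0 hs0)) (sq_nonneg (r-s)), hid]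

/-- The planar winding map `z ↦ z² / |z|` (sending `0` to `0`). -/
noncomputable def windingMap (z : ℂ) : ℂ := z ^ 2 / ((‖z‖ : ℝ) : ℂ)

private lemma windingMap_abs (z : ℂ) : ‖windingMap z‖ = ‖z‖ := by
  rcases eq_or_ne z 0 with rfl | hz
  · simp [windingMap]
  · have h : ‖z‖ ≠ 0 := by simpa using hz
    rw [windingMap, norm_div, norm_pow, Complex.norm_real, Real.norm_eq_abs,
      _root_.abs_of_nonneg (norm_nonneg z)]
    field_simp

/-- the planar winding map is 2-Lipschitz. -/
theorem windingMap_lipschitz : LipschitzWith 2 windingMap := by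
  rw [lipschitzWith_iff_dist_le_mul]
  intro z ζ
  rcases eq_or_ne z 0 with rfl | hz
  · rw [show windingMap 0 = 0 by simp [windingMap]]
    rw [dist_eq_norm, dist_eq_norm, zero_sub, zero_sub, norm_neg, norm_neg]
    calc ‖windingMap ζ‖ = ‖ζ‖ := windingMap_abs ζ
    _ ≤ 2 * ‖ζ‖ := by nlinarith [norm_nonneg ζ]
  rcases eq_or_ne ζ 0 with rfl | hζ
  · rw [show windingMap 0 = 0 by simp [windingMap]]
    rw [dist_eq_norm, dist_eq_norm, sub_zero, sub_zero]
    calc ‖windingMap z‖ = ‖z‖ := windingMap_abs z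
    _ ≤ 2 * ‖z‖ := by nlinarith [norm_nonneg z]
  set r : ℝ := ‖z‖ with hr
  set s : ℝ := ‖ζ‖ with hs
  have hr0 : 0 < r := by simpa [hr] using hz
  have hs0 : 0 < s := by simpa [hs] using hζ
  have hrc : (r : ℂ) ≠ 0 := by exact_mod_cast hr0.ne'
  have hsc : (s : ℂ) ≠ 0 := by exact_mod_cast hs0.ne'
  have hdiff : windingMap z - windingMap ζ
      = ((s : ℂ) * z^2 - (r : ℂ) * ζ^2) / ((r : ℂ) * (s : ℂ)) := by
    unfold windingMap
    rw [← hr, ← hs]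
    field_simp
  have habs : ‖(s : ℂ) * z^2 - (r : ℂ) * ζ^2‖
      ≤ 2 * r * s * ‖z - ζ‖ := by
    have h2 : (‖(s : ℂ) * z^2 - (r : ℂ) * ζ^2‖)^2
        ≤ (2 * r * s * ‖z - ζ‖)^2 := by
      rw [Complex.sq_norm]
      have hrhs : (2 * r * s * ‖z - ζ‖)^2
          = 4 * r^2 * s^2 * Complex.normSq (z - ζ) := by
        rw [mul_pow, ← Complex.sq_norm]; ring
      rw [hrhs]
      have key := winding_key z.re z.im ζ.re ζ.im r s
        (by simp [hr, Complex.sq_norm, Complex.normSq_apply]; ring)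
        (by simp [hs, Complex.sq_norm, Complex.normSq_apply]; ring)
        (norm_nonneg z) (norm_nonneg ζ)
      have hre : ((s : ℂ) * z^2 - (r : ℂ) * ζ^2).re
          = s*(z.re^2 - z.im^2) - r*(ζ.re^2 - ζ.im^2) := by
        simp [pow_two, Complex.mul_re, Complex.mul_im]; try ring
      have him : ((s : ℂ) * z^2 - (r : ℂ) * ζ^2).im
          = s*(2*z.re*z.im) - r*(2*ζ.re*ζ.im) := by
        simp [pow_two, Complex.mul_re, Complex.mul_im]; try ring
      rw [Complex.normSq_apply, Complex.normSq_apply, hre, him, Complex.sub_re, Complex.sub_im]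
      nlinarith [key]
    have hb : 0 ≤ 2 * r * s * ‖z - ζ‖ := by positivity
    exact le_of_pow_le_pow_left₀ two_ne_zero hb h2
  rw [dist_eq_norm, hdiff]
  have : ‖((s : ℂ) * z^2 - (r : ℂ) * ζ^2) / ((r : ℂ) * (s : ℂ))‖
      = ‖(s : ℂ) * z^2 - (r : ℂ) * ζ^2‖ / (r * s) := by
    rw [norm_div, norm_mul]
    simp [Complex.norm_real, _root_.abs_of_nonneg hr0.le, _root_.abs_of_nonneg hs0.le]
  rw [this, div_le_iff₀ (by positivity)]
  rw [Complex.dist_eq]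
  calc ‖(s : ℂ) * z^2 - (r : ℂ) * ζ^2‖
      ≤ 2 * r * s * ‖z - ζ‖ := habs
  _ = (2 : NNReal) * ‖z - ζ‖ * (r * s) := by push_cast; ring
end

section
/- Let f : X → Y be an L-LQ map between metric spaces and suppose every fiber of f restricted to a ball B(x₀, R) has at most N points. Fix s > 0 with 2L(N+1)s ≤ R/2. Then any set of points in B(x₀, R/2) whose images under f lie in a common set of diameter ≤ s, and which are pairwise at distance > 2Ls, has cardinality at most N. -/
open Set Metric

/-- An `L`-Lipschitz quotient mapping. -/
def IsLQ {X Y : Type*} [MetricSpace X] [MetricSpace Y] (L : ℝ) (f : X → Y) : Prop :=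
  ∀ (x : X) (r : ℝ), 0 < r →
    Metric.ball (f x) (r / L) ⊆ f '' Metric.ball x r ∧
      f '' Metric.ball x r ⊆ Metric.ball (f x) (L * r)

/-- if every fiber of an L-LQ map meets `B(x₀,R)` in at most `N`
points and `2L(N+1)s ≤ R/2`, then any `2Ls`-separated set in `B(x₀, R/2)` whose
images pairwise lie within distance `s` has at most `N` points. -/
theorem lq_separated_card_le {X Y : Type*} [MetricSpace X] [MetricSpace Y]
    (f : X → Y) (L : ℝ) (hL : 1 ≤ L) (hf : IsLQ L f)
    (x₀ : X) (R : ℝ) (N : ℕ)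
    (hmult : ∀ y : Y, (Metric.ball x₀ R ∩ f ⁻¹' {y}).encard ≤ N)
    (s : ℝ) (hs : 0 < s) (hsR : 2 * L * (N + 1) * s ≤ R / 2)
    (T : Set X) (hT : T ⊆ Metric.ball x₀ (R / 2))
    (himg : ∀ a ∈ T, ∀ b ∈ T, dist (f a) (f b) ≤ s)
    (hsep : ∀ a ∈ T, ∀ b ∈ T, a ≠ b → 2 * L * s < dist a b) :
    T.encard ≤ N := by
  classical
  have hL0 : (0:ℝ) < L := lt_of_lt_of_le one_pos hL
  by_contra hcon
  push_neg at hcon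
  have hle : ((N:ℕ∞) + 1) ≤ T.encard :=
    (ENat.add_one_le_iff (ENat.coe_ne_top N)).mpr hcon
  obtain ⟨T', hT'sub, hT'card⟩ := Set.exists_subset_encard_eq hle
  have hT'card' : T'.encard = ((N + 1 : ℕ) : ℕ∞) := by
    rw [hT'card]; push_cast; rfl
  have hfin : T'.Finite := Set.finite_of_encard_eq_coe hT'card'
  have hne : T'.Nonempty := by
    rw [← Set.encard_ne_zero, hT'card]
    intro h
    have : (1 : ℕ∞) ≤ (N : ℕ∞) + 1 := le_add_self
    rw [h] at this
    simp at this
  obtain ⟨t₀, ht₀⟩ := hne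
  -- find δ
  have hδex : ∃ δ : ℝ, 0 < δ ∧ δ ≤ L * s ∧
      ∀ a ∈ T', ∀ b ∈ T', a ≠ b → 2 * (L * s) + 2 * δ ≤ dist a b := by
    set F := hfin.toFinset with hF
    set P := (F ×ˢ F).filter (fun p => p.1 ≠ p.2) with hP
    rcases P.eq_empty_or_nonempty with hPe | hPne
    · refine ⟨L * s, by positivity, le_refl _, ?_⟩
      intro a ha b hb hab
      exfalso
      have hmem : (a, b) ∈ P := by
        simp only [hP, Finset.mem_filter, Finset.mem_product, hF, hfin.mem_toFinset]
        exact ⟨⟨ha, hb⟩, hab⟩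
      rw [hPe] at hmem
      exact absurd hmem (Finset.notMem_empty _)
    · set d := P.inf' hPne (fun p => dist p.1 p.2) with hd
      have hdgt : 2 * (L * s) < d := by
        rw [hd, Finset.lt_inf'_iff]
        rintro ⟨a, b⟩ hp
        simp only [hP, Finset.mem_filter, Finset.mem_product, hF, hfin.mem_toFinset] at hp
        have := hsep a (hT'sub hp.1.1) b (hT'sub hp.1.2) hp.2
        linarith
      refine ⟨min (L * s) ((d - 2 * (L * s)) / 2), lt_min (by positivity) (by linarith),
        min_le_left _ _, ?_⟩
      intro a ha b hb hab
      have hmem : (a, b) ∈ P := by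
        simp only [hP, Finset.mem_filter, Finset.mem_product, hF, hfin.mem_toFinset]
        exact ⟨⟨ha, hb⟩, hab⟩
      have h1 : d ≤ dist a b := Finset.inf'_le _ hmem
      have h2 : min (L * s) ((d - 2 * (L * s)) / 2) ≤ (d - 2 * (L * s)) / 2 :=
        min_le_right _ _
      linarith
  obtain ⟨δ, hδ0, hδle, hδsep⟩ := hδex
  set r := L * s + δ with hrdef
  have hr0 : 0 < r := by positivity
  have hN0 : (0:ℝ) ≤ N := Nat.cast_nonneg N
  have h2Ls : 2 * L * s ≤ R / 2 := by nlinarith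
  have hrR : r ≤ R / 2 := by
    have : r ≤ 2 * L * s := by rw [hrdef]; linarith
    linarith
  -- construct fiber points
  have hz : ∀ t : X, ∃ z, t ∈ T' →
      z ∈ Metric.ball x₀ R ∩ f ⁻¹' {f t₀} ∧ z ∈ Metric.ball t r := by
    intro t
    by_cases ht : t ∈ T'
    · have hdist : dist (f t₀) (f t) ≤ s := himg t₀ (hT'sub ht₀) t (hT'sub ht)
      have hlt : s < r / L := by
        rw [lt_div_iff₀ hL0, hrdef]; nlinarith
      have hmem : f t₀ ∈ Metric.ball (f t) (r / L) := by
        rw [Metric.mem_ball]; linarith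
      obtain ⟨z, hzb, hzf⟩ := (hf t r hr0).1 hmem
      refine ⟨z, fun _ => ⟨⟨?_, by simp [hzf]⟩, hzb⟩⟩
      rw [Metric.mem_ball] at hzb ⊢
      have h2 : dist t x₀ < R / 2 := Metric.mem_ball.mp (hT (hT'sub ht))
      calc dist z x₀ ≤ dist z t + dist t x₀ := dist_triangle _ _ _
        _ < r + R / 2 := by linarith
        _ ≤ R := by linarith
    · exact ⟨t, fun h => absurd h ht⟩
  choose g hg using hz
  have hinj : Set.InjOn g T' := by
    intro a ha b hb hab
    by_contra hne'
    have h1 : dist (g a) a < r := Metric.mem_ball.mp ((hg a ha).2)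
    have h2 : dist (g b) b < r := Metric.mem_ball.mp ((hg b hb).2)
    have h3 : 2 * (L * s) + 2 * δ ≤ dist a b := hδsep a ha b hb hne'
    have h4 : dist a b ≤ dist a (g a) + dist (g b) b := by
      calc dist a b ≤ dist a (g a) + dist (g a) b := dist_triangle _ _ _
        _ = dist a (g a) + dist (g b) b := by rw [hab]
    rw [dist_comm a (g a)] at h4
    have : dist a b < 2 * r := by linarith
    rw [hrdef] at this
    linarith
  have himgsub : g '' T' ⊆ Metric.ball x₀ R ∩ f ⁻¹' {f t₀} := by
    rintro x ⟨t, ht, rfl⟩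
    exact (hg t ht).1
  have hchain : ((N:ℕ∞) + 1) ≤ (Metric.ball x₀ R ∩ f ⁻¹' {f t₀}).encard := by
    calc ((N:ℕ∞) + 1) = T'.encard := hT'card.symm
      _ = (g '' T').encard := (hinj.encard_image).symm
      _ ≤ _ := Set.encard_mono himgsub
  have hfinal := le_trans hchain (hmult (f t₀))
  have : (N:ℕ∞) < (N:ℕ∞) := (ENat.add_one_le_iff (ENat.coe_ne_top N)).mp hfinal
  exact lt_irrefl _ this
end
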